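/- Let G be a group, n ≥ 3, E the set of idempotents of End F_n(G), and IG(E) the free idempotent generated monoid over E. Let a : {1,…,n} → G with a(1) = 1 and j ∈ {1,…,n}. If a(j) = 1 (equivalently, the composite e_{1j} e_{a,1} equals e_{11}), then ē_{11} ē_{a,j} ē_{11} = ē_{11} in IG(E). -/

import Mathlib

/-- An endomorphism of the rank-`n` free left `G`-act `F_n(G) = G × Fin n`
(the formal symbols `g x_i` are the pairs `(g, i)`), where the action is
`h • (g, i) = (h * g, i)` and equivariance says `(h • x) a = h • (x a)`. -/
structure ActEnd (G : Type*) [Group G] (n : ℕ) : Type _ where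
  toFun : G × Fin n → G × Fin n
  equivariant : ∀ (h : G) (x : G × Fin n),
    toFun (h * x.1, x.2) = (h * (toFun x).1, (toFun x).2)

namespace ActEnd

variable {G : Type*} [Group G] {n : ℕ}

/-- Composition is written left-to-right: `x (a * b) = (x a) b`. -/
instance : Monoid (ActEnd G n) where
  mul a b := ⟨fun x => b.toFun (a.toFun x), by
    intro h x
    try dsimp only
    rw [a.equivariant h x, b.equivariant]⟩
  one := ⟨id, fun _ _ => rfl⟩
  mul_assoc _ _ _ := rfl
  one_mul _ := rfl
  mul_one _ := rfl

@[simp] theorem mul_toFun (a b : ActEnd G n) (x : G × Fin n) :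
    (a * b).toFun x = b.toFun (a.toFun x) := rfl

theorem ext' {a b : ActEnd G n} (h : a.toFun = b.toFun) : a = b := by
  cases a; cases b; cases h; rfl

/-- The rank of an endomorphism of `F_n(G)`: the number of indices `j` such
that `G x_j` meets the image. -/
noncomputable def rank (a : ActEnd G n) : ℕ :=
  Nat.card {j : Fin n // ∃ x, (a.toFun x).2 = j}

end ActEnd

namespace ActEnd

variable {G : Type*} [Group G] {n : ℕ}

/-- The rank-1 idempotent `e_{a,j}` given by `(g x_t) e_{a,j} = (g * a t * (a j)⁻¹) x_j`.
Taking `a` constantly `1` gives `e_{1j}`, and also `j = 0` gives `e_{11}`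
(indices `1, …, n` are realised as `Fin n`, with `1 ↦ 0`). -/
def eaj (a : Fin n → G) (j : Fin n) : ActEnd G n :=
  ⟨fun x => (x.1 * a x.2 * (a j)⁻¹, j), by intro h x; simp [mul_assoc]⟩

theorem eaj_idem (a : Fin n → G) (j : Fin n) : eaj a j * eaj a j = eaj a j := by
  apply ext'
  funext x
  simp [eaj, mul_assoc]

/-- The map `a_g : g' x_t ↦ (g' * g) x_1`. -/
def aMap (g : G) (h0 : 0 < n) : ActEnd G n :=
  ⟨fun x => (x.1 * g, ⟨0, h0⟩), by intro h x; simp [mul_assoc]⟩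

end ActEnd

/-- The principal left ideal `M a` of `a`. -/
def lIdeal {M : Type*} [Monoid M] (a : M) : Set M := Set.range fun m => m * a

/-- The principal right ideal `a M` of `a`. -/
def rIdeal {M : Type*} [Monoid M] (a : M) : Set M := Set.range fun m => a * m

/-- The `H`-class of `e`: all elements that are both `L`- and `R`-related to `e`. -/
def hClass {M : Type*} [Monoid M] (e : M) : Set M :=
  {a | lIdeal a = lIdeal e ∧ rIdeal a = rIdeal e}

/-- The defining relation of the free idempotent generated monoid `IG(E)`:
`ē f̄ = (e f)‾` whenever `{e, f} ∩ {e f, f e} ≠ ∅`. -/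
def igRel (M : Type*) [Monoid M] :
    FreeMonoid {e : M // e * e = e} → FreeMonoid {e : M // e * e = e} → Prop :=
  fun x y => ∃ e f g : {e : M // e * e = e},
    (e.1 * f.1 = e.1 ∨ e.1 * f.1 = f.1 ∨ f.1 * e.1 = e.1 ∨ f.1 * e.1 = f.1) ∧
    e.1 * f.1 = g.1 ∧
    x = FreeMonoid.of e * FreeMonoid.of f ∧ y = FreeMonoid.of g

/-- The free idempotent generated monoid over the biordered set of idempotents
of `M`: the presented monoid with generators `ē` for each idempotent `e` and
relations `ē f̄ = (e f)‾` whenever `{e, f} ∩ {e f, f e} ≠ ∅`. -/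
abbrev IG (M : Type*) [Monoid M] : Type _ := (conGen (igRel M)).Quotient

/-- The generator `ē` of `IG(E)` corresponding to the idempotent `e`. -/
def ebar {M : Type*} [Monoid M] (e : {e : M // e * e = e}) : IG M :=
  (conGen (igRel M)).mk' (FreeMonoid.of e)

/-- `ē_{a,j}` as an element of `IG(E)` for `E` the idempotents of `End F_n(G)`. -/
def igE {G : Type*} [Group G] {n : ℕ} (a : Fin n → G) (j : Fin n) : IG (ActEnd G n) :=
  ebar ⟨ActEnd.eaj a j, ActEnd.eaj_idem a j⟩

/-- `ē_{11}` as an element of `IG(E)`. -/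
def ig11 {G : Type*} [Group G] {n : ℕ} (h0 : 0 < n) : IG (ActEnd G n) :=
  igE (fun _ => (1 : G)) ⟨0, h0⟩

/-!
`e₁₁ e_{a,j}` is not a basic product, but it factors through the rank-2 idempotent `q`
retracting onto `x₁, x_j`: `e₁₁ q = e₁₁` and `e_{a,j} q = e_{a,j}` are basic, and since
`a 1 = a j`, `q e_{a,j} = e_{1j}`. So `ē₁₁ ē_{a,j} ē₁₁ = ē₁₁ q̄ ē_{a,j} ē₁₁ = ē₁₁ ē_{1j} ē₁₁ = ē₁₁`,
the last step because `e₁₁` and `e_{1j}` are `R`-related.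
-/

theorem ebar_mul_ebar {M : Type*} [Monoid M] {e f g : {e : M // e * e = e}}
    (hbasic : e.1 * f.1 = e.1 ∨ e.1 * f.1 = f.1 ∨ f.1 * e.1 = e.1 ∨ f.1 * e.1 = f.1)
    (hg : e.1 * f.1 = g.1) : ebar e * ebar f = ebar g := by
  rw [ebar, ebar, ebar, ← map_mul]
  exact (Con.eq _).mpr (ConGen.Rel.of _ _ ⟨e, f, g, hbasic, hg, rfl, rfl⟩)

theorem ebar_mul_ebar_mul_ebar_eq_self {M : Type*} [Monoid M] {e f q k : {e : M // e * e = e}}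
    (heq : e.1 * q.1 = e.1) (hfq : f.1 * q.1 = f.1) (hqf : q.1 * f.1 = k.1)
    (hek : e.1 * k.1 = k.1) (hke : k.1 * e.1 = e.1) :
    ebar e * ebar f * ebar e = ebar e :=
  calc ebar e * ebar f * ebar e
      = ebar e * (ebar q * ebar f) * ebar e := by
        rw [← mul_assoc, ebar_mul_ebar (Or.inl heq) heq]
    _ = ebar e * ebar k * ebar e := by rw [ebar_mul_ebar (Or.inr (Or.inr (Or.inr hfq))) hqf]
    _ = ebar k * ebar e := by rw [ebar_mul_ebar (Or.inr (Or.inl hek)) hek]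
    _ = ebar e := ebar_mul_ebar (Or.inr (Or.inl hke)) hke

namespace ActEnd

variable {G : Type*} [Group G] {n : ℕ}

def pairRetraction (i j : Fin n) : ActEnd G n :=
  ⟨fun x => (x.1, if x.2 = i ∨ x.2 = j then x.2 else i), fun _ _ => rfl⟩

theorem pairRetraction_idem (i j : Fin n) :
    pairRetraction (G := G) i j * pairRetraction i j = pairRetraction i j := by
  refine ext' (funext fun x => ?_)
  simp only [mul_toFun, pairRetraction]
  split_ifs <;> simp_all

theorem eaj_mul_pairRetraction_of_mem {a : Fin n → G} {i j k : Fin n} (hk : k = i ∨ k = j) :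
    eaj a k * pairRetraction i j = eaj a k :=
  ext' (funext fun x => by simp [eaj, pairRetraction, hk])

theorem pairRetraction_mul_eaj {a : Fin n → G} {i j : Fin n} (ha : a i = a j) :
    pairRetraction i j * eaj a j = eaj (fun _ => 1) j := by
  refine ext' (funext fun x => ?_)
  simp only [mul_toFun, pairRetraction, eaj]
  split_ifs with h
  · rcases h with h | h <;> simp [h, ha]
  · simp [ha]

theorem eaj_one_mul_eaj {a : Fin n → G} {i j : Fin n} (ha : a i = a j) :
    eaj (fun _ => 1) i * eaj a j = eaj (fun _ => 1) j :=
  ext' (funext fun x => by simp [eaj, ha])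

end ActEnd

/-- If `a j = 1` (equivalently `e_{1j} e_{a,1} = e_{11}`), then
`ē_{11} ē_{a,j} ē_{11} = ē_{11}` in `IG(E)`. -/
theorem stmt13 {G : Type*} [Group G] {n : ℕ} (hn : 3 ≤ n)
    (a : Fin n → G) (ha : a ⟨0, by omega⟩ = 1) (j : Fin n) (haj : a j = 1) :
    ig11 (G := G) (n := n) (by omega) * igE a j * ig11 (G := G) (n := n) (by omega) = ig11 (G := G) (n := n) (by omega) := by
  have h0 : 0 < n := by omega
  unfold ig11 igE
  refine ebar_mul_ebar_mul_ebar_eq_self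
    (q := ⟨ActEnd.pairRetraction ⟨0, h0⟩ j, ActEnd.pairRetraction_idem _ j⟩)
    (k := ⟨ActEnd.eaj (fun _ => 1) j, ActEnd.eaj_idem _ j⟩) ?_ ?_ ?_ ?_ ?_ <;> dsimp only
  · exact ActEnd.eaj_mul_pairRetraction_of_mem (Or.inl rfl)
  · exact ActEnd.eaj_mul_pairRetraction_of_mem (Or.inr rfl)
  · exact ActEnd.pairRetraction_mul_eaj (ha.trans haj.symm)
  · exact ActEnd.eaj_one_mul_eaj (a := fun _ => 1) rfl
  · exact ActEnd.eaj_one_mul_eaj (a := fun _ => 1) rfl
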